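/- Proposition 2 with the empirical deviation s (one-dimensional precise form of Eq. (11)). Let G ⊆ ℝ be a convex set, μ₀ a point in the interior of G, and d₀ = infDist(μ₀, frontier G) the distance from μ₀ to the topological boundary of G. Let σ₀ > 0, and let L, C, s be positive real numbers satisfying s² > C·σ₀²/L (so that σ₀ < s·√(L/C)). If r is distributed according to the Gaussian measure on ℝ with mean μ₀ and variance σ₀², then Pr(r ∈ interior G) ≥ erf(d₀·√C/(s·√(2L))); that is, (gaussianReal μ₀ σ₀²)(interior G) ≥ erf(d₀·√C/(s·√(2L))). -/

import Mathlib

open MeasureTheory ProbabilityTheory Real Metric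

/-- The Gaussian error function `erf x = (2/√π) ∫₀ˣ exp (−t²) dt`. -/
noncomputable def erf (x : ℝ) : ℝ := (2 / Real.sqrt Real.pi) * ∫ t in (0:ℝ)..x, Real.exp (-t ^ 2)

/-! The ball of radius `d₀` around `μ₀` lies in `interior G`, and the Gaussian mass of that ball is
`erf (d₀ / (σ₀ √2))`. Since `s² > C σ₀² / L` means `σ₀ √C < s √L`, the argument
`d₀ √C / (s √(2L))` is at most `d₀ / (σ₀ √2)`, and `erf` is monotone. -/

open Set intervalIntegral

theorem IsPreconnected.subset_interior_of_disjoint_frontier {X : Type*} [TopologicalSpace X]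
    {s t : Set X} (hs : IsPreconnected s) (hne : (s ∩ interior t).Nonempty)
    (hdisj : Disjoint s (frontier t)) : s ⊆ interior t :=
  hs.subset_of_closure_inter_subset isOpen_interior hne fun x ⟨hx_cl, hx_s⟩ => by
    by_contra hx
    exact disjoint_left.mp hdisj hx_s ⟨closure_mono interior_subset hx_cl, hx⟩

theorem ball_infDist_frontier_subset_interior {E : Type*} [SeminormedAddCommGroup E]
    [NormedSpace ℝ E] {G : Set E} {x : E} (hx : x ∈ interior G) :
    ball x (infDist x (frontier G)) ⊆ interior G := by
  rcases (infDist_nonneg (x := x) (s := frontier G)).eq_or_lt with h | h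
  · simp [← h]
  · exact (convex_ball x _).isPreconnected.subset_interior_of_disjoint_frontier
      ⟨x, mem_ball_self h, hx⟩ disjoint_ball_infDist

theorem intervalIntegrable_exp_neg_sq (a b : ℝ) :
    IntervalIntegrable (fun t => rexp (-t ^ 2)) volume a b :=
  (by fun_prop : Continuous fun t : ℝ => rexp (-t ^ 2)).intervalIntegrable a b

theorem erf_monotone : Monotone erf := fun a b hab => by
  have h : 0 ≤ ∫ t in a..b, rexp (-t ^ 2) := integral_nonneg hab fun t _ => (exp_pos _).le
  rw [← integral_interval_sub_left (intervalIntegrable_exp_neg_sq 0 b)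
    (intervalIntegrable_exp_neg_sq 0 a)] at h
  exact mul_le_mul_of_nonneg_left (by linarith) (by positivity)

theorem integral_exp_neg_sq_neg_self (b : ℝ) : ∫ t in -b..b, rexp (-t ^ 2) = √π * erf b := by
  have h_neg : ∫ t in -b..0, rexp (-t ^ 2) = ∫ t in 0..b, rexp (-t ^ 2) := by
    have h := integral_comp_neg (a := 0) (b := b) fun t => rexp (-t ^ 2)
    simp only [neg_sq, neg_zero] at h
    exact h.symm
  rw [← integral_add_adjacent_intervals (intervalIntegrable_exp_neg_sq (-b) 0)
    (intervalIntegrable_exp_neg_sq 0 b), h_neg, erf]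
  field_simp
  ring

theorem gaussianReal_ball {σ : ℝ} (hσ : 0 < σ) (μ : ℝ) {d : ℝ} (hd : 0 ≤ d) :
    gaussianReal μ (σ ^ 2).toNNReal (ball μ d) = ENNReal.ofReal (erf (d / (σ * √2))) := by
  have hv : (σ ^ 2).toNNReal ≠ 0 := by simpa using hσ.ne'
  set c := σ * √2 with hc_def
  have hc : 0 < c := by positivity
  have h_pdf : ∀ x, gaussianPDFReal μ (σ ^ 2).toNNReal x
      = (c * √π)⁻¹ * rexp (-((x - μ) / c) ^ 2) := fun x => by
    rw [hc_def]
    rw [gaussianPDFReal, Real.coe_toNNReal _ (sq_nonneg σ), div_pow, mul_pow, sq_sqrt zero_le_two,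
      show 2 * π * σ ^ 2 = σ ^ 2 * 2 * π by ring, sqrt_mul (by positivity), sqrt_mul (sq_nonneg σ),
      sqrt_sq hσ.le, neg_div]
    ring_nf
  rw [gaussianReal_apply_eq_integral μ hv, Real.ball_eq_Ioo, ← integral_Ioc_eq_integral_Ioo,
    ← integral_of_le (by linarith)]
  simp_rw [h_pdf]
  rw [intervalIntegral.integral_const_mul, integral_comp_sub_right (fun x => rexp (-(x / c) ^ 2)),
    integral_comp_div (fun x => rexp (-x ^ 2)) hc.ne', sub_sub_cancel_left, add_sub_cancel_left,
    neg_div, integral_exp_neg_sq_neg_self, smul_eq_mul]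
  congr 1
  field_simp

theorem gaussian_interior_prob_ge_erf_of_empirical_deviation_general
    {G : Set ℝ} {μ₀ : ℝ} (hμ₀ : μ₀ ∈ interior G)
    {σ₀ L C s : ℝ} (hσ₀ : 0 < σ₀) (hL : 0 < L) (hC : 0 < C) (hs : 0 < s)
    (hdev : s ^ 2 > C * σ₀ ^ 2 / L) :
    ENNReal.ofReal
        (erf (Metric.infDist μ₀ (frontier G) * Real.sqrt C / (s * Real.sqrt (2 * L)))) ≤
      (gaussianReal μ₀ (σ₀ ^ 2).toNNReal) (interior G) := by
  set d₀ := infDist μ₀ (frontier G)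
  have hd₀ : 0 ≤ d₀ := infDist_nonneg
  have hσ₀s : √C * σ₀ ≤ √L * s := by
    rw [← sqrt_sq hσ₀.le, ← sqrt_sq hs.le, ← sqrt_mul hC.le, ← sqrt_mul hL.le]
    exact sqrt_le_sqrt (by rw [gt_iff_lt, div_lt_iff₀ hL] at hdev; linarith)
  have h_arg : d₀ * √C / (s * √(2 * L)) ≤ d₀ / (σ₀ * √2) := by
    rw [sqrt_mul zero_le_two, div_le_div_iff₀ (by positivity) (by positivity)]
    calc d₀ * √C * (σ₀ * √2) = d₀ * √2 * (√C * σ₀) := by ring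
      _ ≤ d₀ * √2 * (√L * s) := by gcongr
      _ = d₀ * (s * (√2 * √L)) := by ring
  calc ENNReal.ofReal (erf (d₀ * √C / (s * √(2 * L))))
      ≤ ENNReal.ofReal (erf (d₀ / (σ₀ * √2))) := ENNReal.ofReal_le_ofReal (erf_monotone h_arg)
    _ = gaussianReal μ₀ (σ₀ ^ 2).toNNReal (ball μ₀ d₀) := (gaussianReal_ball hσ₀ μ₀ hd₀).symm
    _ ≤ gaussianReal μ₀ (σ₀ ^ 2).toNNReal (interior G) :=
      measure_mono (ball_infDist_frontier_subset_interior hμ₀)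

/-- Proposition 2 with the empirical deviation `s` (Eq. (11), one-dimensional form): if
`s² > C σ₀² / L`, then a Gaussian sample with mean `μ₀ ∈ interior G` and variance `σ₀²` lands
in the interior of the convex set `G` with probability at least `erf (d₀ √C / (s √(2L)))`. -/
theorem gaussian_interior_prob_ge_erf_of_empirical_deviation
    {G : Set ℝ} (hG : Convex ℝ G) {μ₀ : ℝ} (hμ₀ : μ₀ ∈ interior G)
    {σ₀ L C s : ℝ} (hσ₀ : 0 < σ₀) (hL : 0 < L) (hC : 0 < C) (hs : 0 < s)
    (hdev : s ^ 2 > C * σ₀ ^ 2 / L) :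
    ENNReal.ofReal
        (erf (Metric.infDist μ₀ (frontier G) * Real.sqrt C / (s * Real.sqrt (2 * L)))) ≤
      (gaussianReal μ₀ (σ₀ ^ 2).toNNReal) (interior G) :=
  gaussian_interior_prob_ge_erf_of_empirical_deviation_general hμ₀ hσ₀ hL hC hs hdev
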